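/- arXiv:2201.01215 — 5 statements merged into one kernel-verified Lean document; each statement's English description precedes it below -/
import Mathlib

section
/- Let Γ be a finite simplicial graph and define the link-star preorder on vertices by u ≲ v if and only if lk(u) ⊆ st(v). If two vertices u and v of Γ are equivalent under this preorder (u ≲ v and v ≲ u), then the subgraph of Γ induced by the equivalence class [v] is either a complete graph or has no edges (totally disconnected). -/
/-- The link of a vertex: its set of neighbors. -/
def lk {V : Type*} (G : SimpleGraph V) (v : V) : Set V := G.neighborSet v

/-- The star of a vertex: the vertex together with its neighbors. -/
def st {V : Type*} (G : SimpleGraph V) (v : V) : Set V := insert v (G.neighborSet v)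

/-- The link-star preorder: `u ≲ v` iff `lk u ⊆ st v`. -/
def lkst {V : Type*} (G : SimpleGraph V) (u v : V) : Prop := lk G u ⊆ st G v

lemma st_mem {V : Type*} (G : SimpleGraph V) {u w : V} (h : w ∈ st G u) :
    w = u ∨ G.Adj u w := by
  rcases h with h | h
  · exact Or.inl h
  · exact Or.inr h

lemma lk_mem {V : Type*} (G : SimpleGraph V) {u w : V} (h : G.Adj u w) :
    w ∈ lk G u := h

/-- The equivalence class `[v]` of a vertex `v` under the link-star preorder induces
either a complete subgraph or a totally disconnected subgraph. -/
theorem stmt_0 {V : Type*} [Fintype V] (G : SimpleGraph V) (v : V) :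
    (∀ u₁ ∈ {u | lkst G u v ∧ lkst G v u}, ∀ u₂ ∈ {u | lkst G u v ∧ lkst G v u},
      u₁ ≠ u₂ → G.Adj u₁ u₂) ∨
    (∀ u₁ ∈ {u | lkst G u v ∧ lkst G v u}, ∀ u₂ ∈ {u | lkst G u v ∧ lkst G v u},
      ¬ G.Adj u₁ u₂) := by
  by_cases h : ∃ a, (lkst G a v ∧ lkst G v a) ∧ ∃ b, (lkst G b v ∧ lkst G v b) ∧ G.Adj a b
  · left
    obtain ⟨a, ⟨hav, hva⟩, b, ⟨hbv, hvb⟩, hab⟩ := h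
    -- v is adjacent to some member c of the class
    have key : ∃ c, (lkst G c v ∧ lkst G v c) ∧ G.Adj v c := by
      rcases st_mem G (hav (lk_mem G hab)) with hb | hb
      · subst hb
        exact ⟨a, ⟨hav, hva⟩, hab.symm⟩
      · exact ⟨b, ⟨hbv, hvb⟩, hb⟩
    obtain ⟨c, ⟨hcv, hvc⟩, hvcAdj⟩ := key
    -- v is adjacent to every member x ≠ v of the class
    have vadj : ∀ x, lkst G x v → lkst G v x → x ≠ v → G.Adj v x := by
      intro x hxv hvx hne
      rcases st_mem G (hvx (lk_mem G hvcAdj)) with h1 | h1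
      · subst h1; exact hvcAdj
      · rcases st_mem G (hcv (lk_mem G h1.symm)) with h2 | h2
        · exact absurd h2 hne
        · exact h2
    intro u₁ hu₁ u₂ hu₂ hne
    by_cases h1 : u₁ = v
    · subst h1; exact vadj u₂ hu₂.1 hu₂.2 (Ne.symm hne)
    by_cases h2 : u₂ = v
    · subst h2; exact (vadj u₁ hu₁.1 hu₁.2 hne).symm
    have hv2 : G.Adj v u₂ := vadj u₂ hu₂.1 hu₂.2 h2
    rcases st_mem G (hu₁.2 (lk_mem G hv2)) with h3 | h3
    · exact absurd h3.symm hne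
    · exact h3
  · right
    push_neg at h
    intro u₁ hu₁ u₂ hu₂ hab
    exact h u₁ ⟨hu₁.1, hu₁.2⟩ u₂ ⟨hu₂.1, hu₂.2⟩ hab
end

section
/- Let Γ be a finite simple graph with the link-star preorder (u ≲ v iff lk(u) ⊆ st(v)). If v₁ and v₂ are adjacent vertices of Γ, then any vertex u₁ in the equivalence class [v₁] is adjacent to any vertex u₂ in the equivalence class [v₂], unless u₁ = u₂. -/
/-- If `v₁` and `v₂` are adjacent, then any `u₁ ∈ [v₁]` is adjacent to any
`u₂ ∈ [v₂]` unless `u₁ = u₂`. -/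
theorem stmt_1 {V : Type*} [Fintype V] (G : SimpleGraph V) (v₁ v₂ u₁ u₂ : V)
    (hadj : G.Adj v₁ v₂)
    (h₁ : lkst G u₁ v₁ ∧ lkst G v₁ u₁) (h₂ : lkst G u₂ v₂ ∧ lkst G v₂ u₂)
    (hne : u₁ ≠ u₂) : G.Adj u₁ u₂ := by
  have hv₂ : v₂ ∈ st G u₁ := h₁.2 hadj
  rcases hv₂ with h | h
  · -- v₂ = u₁
    subst h
    have hv₁ : v₁ ∈ st G u₂ := h₂.2 hadj.symm
    rcases hv₁ with h' | h'
    · subst h'; exact hadj.symm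
    · have : u₂ ∈ st G v₂ := h₁.2 h'.symm
      rcases this with h'' | h''
      · exact absurd h''.symm hne
      · exact h''
  · -- Adj u₁ v₂
    have : u₁ ∈ st G u₂ := h₂.2 h.symm
    rcases this with h' | h'
    · exact absurd h' hne
    · exact h'.symm
end

section
/- The link-star preorder is transitive: in a finite simple graph Γ, if lk(u) ⊆ st(v) and lk(v) ⊆ st(w), then lk(u) ⊆ st(w). -/
/-- Transitivity of the link-star preorder. -/
theorem stmt_3 {V : Type*} [Fintype V] (G : SimpleGraph V) (u v w : V)
    (h₁ : lk G u ⊆ st G v) (h₂ : lk G v ⊆ st G w) : lk G u ⊆ st G w := by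
  intro x hx
  have hx' := h₁ hx
  simp only [lk, st, SimpleGraph.mem_neighborSet, Set.mem_insert_iff] at *
  rcases hx' with rfl | hadj
  · -- x = v, show v ∈ st w; note G.Adj u v
    have huv : G.Adj x u := hx.symm
    rcases h₂ (by simpa [lk, SimpleGraph.mem_neighborSet] using huv) with rfl | huw
    · -- u = w
      right; exact hx
    · -- G.Adj w u, so w ∈ lk u ⊆ st v
      rcases h₁ (by simpa [lk, SimpleGraph.mem_neighborSet] using huw.symm) with rfl | hwv
      · left; rfl
      · right; exact hwv.symm
  · exact h₂ (by simpa [lk, SimpleGraph.mem_neighborSet] using hadj)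
end

section
/- Let φ : Λ → Γ be a covering map of finite simple graphs. Then φ preserves the link-star preorder: for vertices u₁, u₂ of Λ, if lk(u₁) ⊆ st(u₂) in Λ, then lk(φ(u₁)) ⊆ st(φ(u₂)) in Γ. -/
/-- A covering map of graphs: a map sending the neighbors of each vertex `u`
bijectively onto the neighbors of `φ u` (in particular it is a graph homomorphism). -/
def IsCovering {V W : Type*} (L : SimpleGraph V) (G : SimpleGraph W) (φ : V → W) : Prop :=
  ∀ u : V, Set.BijOn φ (L.neighborSet u) (G.neighborSet (φ u))

/-- A regular covering map of graphs: the deck transformations act transitively on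
each fiber. -/
def IsRegularCovering {V W : Type*} (L : SimpleGraph V) (G : SimpleGraph W) (φ : V → W) :
    Prop :=
  IsCovering L G φ ∧
    ∀ u₁ u₂ : V, φ u₁ = φ u₂ → ∃ σ : L ≃g L, (∀ x, φ (σ x) = φ x) ∧ σ u₁ = u₂

/-- A covering map of graphs preserves the link-star preorder. -/
theorem stmt_5 {V W : Type*} [Fintype V] [Fintype W]
    (L : SimpleGraph V) (G : SimpleGraph W) (φ : V → W) (hφ : IsCovering L G φ)
    (u₁ u₂ : V) (h : lkst L u₁ u₂) : lkst G (φ u₁) (φ u₂) := by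
  intro w hw
  obtain ⟨x, hx, rfl⟩ := (hφ u₁).surjOn hw
  rcases h hx with hx2 | hx2
  · exact Set.mem_insert_iff.2 (Or.inl (congrArg φ hx2))
  · exact Set.mem_insert_iff.2 (Or.inr ((hφ u₂).mapsTo hx2))
end

section
/- Let φ : Λ → Γ be a regular covering map of finite simple graphs without isolated vertices, and v, v' vertices of Γ with v ≲_φ v', meaning that for every u ∈ φ⁻¹(v) there exists u' ∈ φ⁻¹(v') with lk(u) ⊆ st(u') in Λ. Then for each u ∈ φ⁻¹(v) such a vertex u' ∈ φ⁻¹(v') is unique. -/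
/-- For a regular covering of graphs without isolated vertices, if `v ≲_φ v'`
(every vertex in the fiber of `v` is dominated by some vertex in the fiber of `v'`),
then for each `u ∈ φ⁻¹(v)` the dominating vertex `u' ∈ φ⁻¹(v')` is unique. -/
theorem stmt_15 {V W : Type*} [Fintype V] [Fintype W]
    (L : SimpleGraph V) (G : SimpleGraph W) (φ : V → W)
    (hφ : IsRegularCovering L G φ)
    (hLiso : ∀ x : V, (L.neighborSet x).Nonempty)
    (hGiso : ∀ y : W, (G.neighborSet y).Nonempty)
    (v v' : W)
    (hvv' : ∀ u : V, φ u = v → ∃ u' : V, φ u' = v' ∧ lkst L u u') :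
    ∀ u : V, φ u = v → ∃! u' : V, φ u' = v' ∧ lkst L u u' := by
  intro u hu
  obtain ⟨u', hu', hlk⟩ := hvv' u hu
  refine ⟨u', ⟨hu', hlk⟩, ?_⟩
  rintro u₂ ⟨hu₂, hlk₂⟩
  by_contra hne
  obtain ⟨hcov, -⟩ := hφ
  -- distinct vertices in the same fiber are not adjacent
  have hnadj : ∀ a b : V, φ a = φ b → L.Adj a b → a = b := by
    intro a b hab h
    have := (hcov a).mapsTo h
    rw [hab] at this
    exact absurd this (G.irrefl)
  -- and have no common neighbor
  have hnocn : ∀ a b x : V, φ a = φ b → L.Adj x a → L.Adj x b → a = b := by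
    intro a b x hab ha hb
    exact (hcov x).injOn ha hb hab
  obtain ⟨x, hx⟩ := hLiso u
  have h1 : x ∈ st L u₂ := hlk₂ hx
  have h2 : x ∈ st L u' := hlk hx
  have hfib : φ u₂ = φ u' := by rw [hu₂, hu']
  rcases h1 with h1 | h1 <;> rcases h2 with h2 | h2
  · exact hne (h1 ▸ h2)
  · exact hne (hnadj u₂ u' hfib (h1 ▸ (L.adj_symm h2)))
  · exact hne (hnadj u₂ u' hfib (h2 ▸ h1))
  · exact hne (hnocn u₂ u' x hfib (L.adj_symm h1) (L.adj_symm h2))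
end
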